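/- The function ϖ(ε) = λ(ε)/ν(ε) is strictly decreasing on the open interval (-1,1). -/

import Mathlib

open Real MeasureTheory intervalIntegral Metric Set

noncomputable def lam (ε : ℝ) : ℝ :=
  (1/4) * ∫ θ in (0:ℝ)..(2*Real.pi), Real.cos θ ^ 2 * (1 + ε * Real.cos (2*θ)) ^ (-(3:ℝ)/2)

noncomputable def mu (ε : ℝ) : ℝ :=
  (1/4) * ∫ θ in (0:ℝ)..(2*Real.pi), Real.sin θ ^ 2 * (1 + ε * Real.cos (2*θ)) ^ (-(3:ℝ)/2)

noncomputable def nu (ε : ℝ) : ℝ :=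
  (1/4) * ∫ θ in (0:ℝ)..(2*Real.pi), (1 + ε * Real.cos (2*θ)) ^ (-(3:ℝ)/2)

namespace Stmt12Aux


lemma pp_ge (ε θ : ℝ) : 1 - |ε| ≤ 1 + ε * Real.cos (2*θ) := by
  have h : |ε * Real.cos (2*θ)| ≤ |ε| := by
    rw [abs_mul]
    nlinarith [Real.abs_cos_le_one (2*θ), abs_nonneg ε]
  have := (abs_le.mp h).1
  linarith

lemma pp_pos {ε : ℝ} (hε : |ε| < 1) (θ : ℝ) : 0 < 1 + ε * Real.cos (2*θ) :=
  lt_of_lt_of_le (by linarith) (pp_ge ε θ)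

lemma cont_pp (ε : ℝ) : Continuous (fun θ : ℝ => 1 + ε * Real.cos (2*θ)) := by
  continuity

lemma cont_w {ε : ℝ} (hε : |ε| < 1) (r : ℝ) :
    Continuous (fun θ : ℝ => (1 + ε * Real.cos (2*θ)) ^ r) :=
  (cont_pp ε).rpow_const (fun θ => Or.inl (ne_of_gt (pp_pos hε θ)))

noncomputable def W (ε : ℝ) : ℝ :=
  ∫ θ in (0:ℝ)..(2*Real.pi), (1 + ε * Real.cos (2*θ)) ^ (-(5:ℝ)/2)
noncomputable def C1 (ε : ℝ) : ℝ :=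
  ∫ θ in (0:ℝ)..(2*Real.pi), Real.cos (2*θ) * (1 + ε * Real.cos (2*θ)) ^ (-(5:ℝ)/2)
noncomputable def C2 (ε : ℝ) : ℝ :=
  ∫ θ in (0:ℝ)..(2*Real.pi), Real.cos (2*θ)^2 * (1 + ε * Real.cos (2*θ)) ^ (-(5:ℝ)/2)

lemma intg {ε : ℝ} (hε : |ε| < 1) {g : ℝ → ℝ} (hg : Continuous g) (r a b : ℝ) :
    IntervalIntegrable (fun θ => g θ * (1 + ε * Real.cos (2*θ)) ^ r) volume a b :=
  (hg.mul (cont_w hε r)).intervalIntegrable a b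

lemma expand {ε : ℝ} (hε : |ε| < 1) (α β γ : ℝ) :
    (∫ θ in (0:ℝ)..(2*Real.pi),
      (α + β * Real.cos (2*θ) + γ * Real.cos (2*θ)^2) * (1 + ε * Real.cos (2*θ)) ^ (-(5:ℝ)/2))
      = α * W ε + β * C1 ε + γ * C2 ε := by
  have key : ∀ θ : ℝ,
      (α + β * Real.cos (2*θ) + γ * Real.cos (2*θ)^2) * (1 + ε * Real.cos (2*θ)) ^ (-(5:ℝ)/2)
      = α * ((1:ℝ) * (1 + ε * Real.cos (2*θ)) ^ (-(5:ℝ)/2))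
        + (β * (Real.cos (2*θ) * (1 + ε * Real.cos (2*θ)) ^ (-(5:ℝ)/2))
        + γ * (Real.cos (2*θ)^2 * (1 + ε * Real.cos (2*θ)) ^ (-(5:ℝ)/2))) := fun θ => by ring
  rw [intervalIntegral.integral_congr (g := fun θ =>
      α * ((1:ℝ) * (1 + ε * Real.cos (2*θ)) ^ (-(5:ℝ)/2))
        + (β * (Real.cos (2*θ) * (1 + ε * Real.cos (2*θ)) ^ (-(5:ℝ)/2))
        + γ * (Real.cos (2*θ)^2 * (1 + ε * Real.cos (2*θ)) ^ (-(5:ℝ)/2)))) (fun θ _ => key θ)]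
  have i1 := (intg hε (continuous_const : Continuous fun _ : ℝ => (1:ℝ)) (-(5:ℝ)/2) 0 (2*Real.pi)).const_mul α
  have i2 := (intg hε (by continuity : Continuous fun θ : ℝ => Real.cos (2*θ)) (-(5:ℝ)/2) 0 (2*Real.pi)).const_mul β
  have i3 := (intg hε (by continuity : Continuous fun θ : ℝ => Real.cos (2*θ)^2) (-(5:ℝ)/2) 0 (2*Real.pi)).const_mul γ
  rw [intervalIntegral.integral_add i1 (i2.add i3), intervalIntegral.integral_add i2 i3]
  simp only [intervalIntegral.integral_const_mul, one_mul, W, C1, C2]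
  ring


-- rewrite p^(-3/2) in terms of p^(-5/2)
lemma pow32 {ε : ℝ} (hε : |ε| < 1) (θ : ℝ) :
    (1 + ε * Real.cos (2*θ)) ^ (-(3:ℝ)/2)
      = (1 + ε * Real.cos (2*θ)) * (1 + ε * Real.cos (2*θ)) ^ (-(5:ℝ)/2) := by
  have h := pp_pos hε θ
  have e : (-(3:ℝ)/2) = 1 + (-(5:ℝ)/2) := by norm_num
  rw [e, Real.rpow_add h, Real.rpow_one]

lemma nu_eq {ε : ℝ} (hε : |ε| < 1) : nu ε = (1/4) * (W ε + ε * C1 ε + 0 * C2 ε) := by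
  unfold nu
  have e : (fun θ : ℝ => (1 + ε * Real.cos (2*θ)) ^ (-(3:ℝ)/2))
      = fun θ : ℝ => ((1:ℝ) + ε * Real.cos (2*θ) + 0 * Real.cos (2*θ)^2)
          * (1 + ε * Real.cos (2*θ)) ^ (-(5:ℝ)/2) :=
    funext fun θ => by rw [pow32 hε]; ring
  rw [e, expand hε]
  ring

lemma lam_eq {ε : ℝ} (hε : |ε| < 1) :
    lam ε = (1/4) * ((1/2) * W ε + ((1+ε)/2) * C1 ε + (ε/2) * C2 ε) := by
  unfold lam
  have e : (fun θ : ℝ => Real.cos θ ^ 2 * (1 + ε * Real.cos (2*θ)) ^ (-(3:ℝ)/2))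
      = fun θ : ℝ => ((1/2 : ℝ) + ((1+ε)/2) * Real.cos (2*θ) + (ε/2) * Real.cos (2*θ)^2)
          * (1 + ε * Real.cos (2*θ)) ^ (-(5:ℝ)/2) :=
    funext fun θ => by rw [Real.cos_sq θ, pow32 hε]; ring
  rw [e, expand hε]

lemma pos_of_sub {f : ℝ → ℝ} (hc : Continuous f) (hnn : ∀ θ, 0 ≤ f θ) {u v : ℝ}
    (h0u : 0 ≤ u) (huv : u < v) (hv : v ≤ 2*Real.pi)
    (hpos : ∀ θ ∈ Set.Ioo u v, 0 < f θ) :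
    0 < ∫ θ in (0:ℝ)..(2*Real.pi), f θ := by
  have i1 : IntervalIntegrable f volume 0 u := hc.intervalIntegrable 0 u
  have i2 : IntervalIntegrable f volume u v := hc.intervalIntegrable u v
  have i3 : IntervalIntegrable f volume v (2*Real.pi) := hc.intervalIntegrable v (2*Real.pi)
  have e1 : (∫ θ in (0:ℝ)..u, f θ) + (∫ θ in u..v, f θ) + (∫ θ in v..(2*Real.pi), f θ)
      = ∫ θ in (0:ℝ)..(2*Real.pi), f θ := by
    rw [intervalIntegral.integral_add_adjacent_intervals i1 i2,
      intervalIntegral.integral_add_adjacent_intervals (i1.trans i2) i3]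
  have p1 : 0 ≤ ∫ θ in (0:ℝ)..u, f θ :=
    intervalIntegral.integral_nonneg h0u (fun x _ => hnn x)
  have p2 : 0 < ∫ θ in u..v, f θ :=
    intervalIntegral.intervalIntegral_pos_of_pos_on i2 hpos huv
  have p3 : 0 ≤ ∫ θ in v..(2*Real.pi), f θ :=
    intervalIntegral.integral_nonneg hv (fun x _ => hnn x)
  linarith

lemma W_pos {ε : ℝ} (hε : |ε| < 1) : 0 < W ε := by
  unfold W
  exact intervalIntegral.intervalIntegral_pos_of_pos_on
    ((cont_w hε _).intervalIntegrable _ _)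
    (fun x _ => Real.rpow_pos_of_pos (pp_pos hε x) _)
    (by positivity)

lemma nu_pos {ε : ℝ} (hε : |ε| < 1) : 0 < nu ε := by
  unfold nu
  have : 0 < ∫ θ in (0:ℝ)..(2*Real.pi), (1 + ε * Real.cos (2*θ)) ^ (-(3:ℝ)/2) :=
    intervalIntegral.intervalIntegral_pos_of_pos_on
      ((cont_w hε _).intervalIntegrable _ _)
      (fun x _ => Real.rpow_pos_of_pos (pp_pos hε x) _)
      (by positivity)
  linarith

lemma J_pos {ε : ℝ} (hε : |ε| < 1) (a : ℝ) :
    0 < ∫ θ in (0:ℝ)..(2*Real.pi),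
      ((a:ℝ)^2 + (-2*a) * Real.cos (2*θ) + 1 * Real.cos (2*θ)^2)
        * (1 + ε * Real.cos (2*θ)) ^ (-(5:ℝ)/2) := by
  have hc : Continuous (fun θ : ℝ =>
      ((a:ℝ)^2 + (-2*a) * Real.cos (2*θ) + 1 * Real.cos (2*θ)^2)
        * (1 + ε * Real.cos (2*θ)) ^ (-(5:ℝ)/2)) := by
    exact (by continuity : Continuous (fun θ : ℝ =>
      (a:ℝ)^2 + (-2*a) * Real.cos (2*θ) + 1 * Real.cos (2*θ)^2)).mul (cont_w hε _)
  have hw : ∀ θ : ℝ, 0 < (1 + ε * Real.cos (2*θ)) ^ (-(5:ℝ)/2) :=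
    fun θ => Real.rpow_pos_of_pos (pp_pos hε θ) _
  have hkey : ∀ θ : ℝ, ((a:ℝ)^2 + (-2*a) * Real.cos (2*θ) + 1 * Real.cos (2*θ)^2)
      = (Real.cos (2*θ) - a)^2 := fun θ => by ring
  have hnn : ∀ θ, 0 ≤ ((a:ℝ)^2 + (-2*a) * Real.cos (2*θ) + 1 * Real.cos (2*θ)^2)
        * (1 + ε * Real.cos (2*θ)) ^ (-(5:ℝ)/2) := by
    intro θ; rw [hkey θ]; exact mul_nonneg (sq_nonneg _) (hw θ).le
  have hpi := Real.pi_gt_three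
  rcases lt_or_ge a (1/2) with ha | ha
  · refine pos_of_sub hc hnn (u := 0) (v := Real.pi/6) le_rfl (by linarith) (by linarith) ?_
    intro θ hθ
    obtain ⟨h1, h2⟩ := hθ
    have hcos : Real.cos (Real.pi/3) < Real.cos (2*θ) :=
      Real.cos_lt_cos_of_nonneg_of_le_pi (by linarith) (by linarith) (by linarith)
    rw [Real.cos_pi_div_three] at hcos
    rw [hkey θ]
    exact mul_pos (by nlinarith) (hw θ)
  · refine pos_of_sub hc hnn (u := Real.pi/3) (v := 2*Real.pi/3) (by linarith) (by linarith)
      (by linarith) ?_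
    intro θ hθ
    obtain ⟨h1, h2⟩ := hθ
    have e1 : Real.cos (2*θ) = -Real.cos (2*θ - Real.pi) := by
      rw [show 2*θ = (2*θ - Real.pi) + Real.pi by ring, Real.cos_add, Real.cos_pi, Real.sin_pi]
      ring
    have habs : |2*θ - Real.pi| < Real.pi/3 := by
      rw [abs_lt]; constructor <;> linarith
    have hcos : Real.cos (Real.pi/3) < Real.cos |2*θ - Real.pi| :=
      Real.cos_lt_cos_of_nonneg_of_le_pi (abs_nonneg _) (by linarith) habs
    rw [Real.cos_pi_div_three, Real.cos_abs] at hcos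
    have hlt : Real.cos (2*θ) < -(1/2) := by rw [e1]; linarith
    rw [hkey θ]
    exact mul_pos (by nlinarith) (hw θ)


lemma Q_pos {ε : ℝ} (hε : |ε| < 1) : C1 ε ^ 2 < C2 ε * W ε := by
  have hW := W_pos hε
  have hJ := J_pos hε (C1 ε / W ε)
  rw [expand hε] at hJ
  have h2 : (C1 ε / W ε) ^ 2 * W ε + -2 * (C1 ε / W ε) * C1 ε + 1 * C2 ε
      = (C2 ε * W ε - C1 ε ^ 2) / W ε := by
    field_simp
    ring_nf
  rw [h2] at hJ
  have h3 := mul_pos hJ hW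
  rw [div_mul_cancel₀ _ hW.ne'] at h3
  linarith

lemma hasDeriv_main {g : ℝ → ℝ} (hg : Continuous g) (hgb : ∀ θ, |g θ| ≤ 1)
    {ε₀ : ℝ} (hε₀ : |ε₀| < 1) :
    HasDerivAt (fun ε => ∫ θ in (0:ℝ)..(2*Real.pi), g θ * (1 + ε * Real.cos (2*θ)) ^ (-(3:ℝ)/2))
      (∫ θ in (0:ℝ)..(2*Real.pi),
        g θ * (Real.cos (2*θ) * (-(3:ℝ)/2) * (1 + ε₀ * Real.cos (2*θ)) ^ (-(3:ℝ)/2 - 1))) ε₀ := by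
  set δ := (1 - |ε₀|)/2 with hδdef
  have hδpos : 0 < δ := by rw [hδdef]; linarith
  have hball : ∀ x ∈ Metric.ball ε₀ δ, |x| < 1 ∧ ∀ θ : ℝ, δ ≤ 1 + x * Real.cos (2*θ) := by
    intro x hx
    rw [Metric.mem_ball, Real.dist_eq] at hx
    have h1 : |x| < (1 + |ε₀|)/2 := by
      have := abs_add_le (x - ε₀) ε₀
      simp only [sub_add_cancel] at this
      rw [hδdef] at hx
      linarith
    refine ⟨by linarith, fun θ => ?_⟩
    have := pp_ge x θ
    rw [hδdef]
    linarith
  have main := intervalIntegral.hasDerivAt_integral_of_dominated_loc_of_deriv_le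
    (F := fun x θ => g θ * (1 + x * Real.cos (2*θ)) ^ (-(3:ℝ)/2))
    (F' := fun x θ => g θ * (Real.cos (2*θ) * (-(3:ℝ)/2)
      * (1 + x * Real.cos (2*θ)) ^ (-(3:ℝ)/2 - 1)))
    (bound := fun _ => (3/2) * δ ^ (-(3:ℝ)/2 - 1))
    (a := (0:ℝ)) (b := 2*Real.pi) (μ := volume) (x₀ := ε₀)
    (Metric.ball_mem_nhds ε₀ hδpos) ?_ ?_ ?_ ?_ ?_ ?_
  · exact main.2
  · filter_upwards [Metric.ball_mem_nhds ε₀ hδpos] with x hx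
    exact ((hg.mul (cont_w (hball x hx).1 _)).aestronglyMeasurable)
  · exact intg hε₀ hg _ _ _
  · exact (hg.mul (((by continuity : Continuous fun θ : ℝ => Real.cos (2*θ)).mul
      continuous_const).mul (cont_w hε₀ _))).aestronglyMeasurable
  · refine Filter.Eventually.of_forall ?_
    intro t _ x hx
    obtain ⟨hx1, hx2⟩ := hball x hx
    have hp : δ ≤ 1 + x * Real.cos (2*t) := hx2 t
    have hppos : 0 < 1 + x * Real.cos (2*t) := lt_of_lt_of_le hδpos hp
    have hpe : (1 + x * Real.cos (2*t)) ^ (-(3:ℝ)/2 - 1) ≤ δ ^ (-(3:ℝ)/2 - 1) :=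
      Real.rpow_le_rpow_of_nonpos hδpos hp (by norm_num)
    have hpe0 : 0 < (1 + x * Real.cos (2*t)) ^ (-(3:ℝ)/2 - 1) :=
      Real.rpow_pos_of_pos hppos _
    rw [Real.norm_eq_abs, abs_mul, abs_mul, abs_mul]
    have h1 := hgb t
    have h2 : |Real.cos (2*t)| ≤ 1 := Real.abs_cos_le_one _
    have h3 : |(-(3:ℝ)/2)| = 3/2 := by norm_num
    have h4 : |(1 + x * Real.cos (2*t)) ^ (-(3:ℝ)/2 - 1)|
        = (1 + x * Real.cos (2*t)) ^ (-(3:ℝ)/2 - 1) := abs_of_pos hpe0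
    rw [h3, h4]
    have hδe : 0 < δ ^ (-(3:ℝ)/2 - 1) := Real.rpow_pos_of_pos hδpos _
    calc |g t| * (|Real.cos (2*t)| * (3/2) * (1 + x * Real.cos (2*t)) ^ (-(3:ℝ)/2 - 1))
        ≤ 1 * (1 * (3/2) * δ ^ (-(3:ℝ)/2 - 1)) := by
          apply mul_le_mul h1 _ (by positivity) one_pos.le
          apply mul_le_mul _ hpe hpe0.le (by positivity)
          apply mul_le_mul_of_nonneg_right h2 (by norm_num)
      _ = 3/2 * δ ^ (-(3:ℝ)/2 - 1) := by ring
  · exact intervalIntegrable_const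
  · refine Filter.Eventually.of_forall ?_
    intro t _ x hx
    have hppos : 0 < 1 + x * Real.cos (2*t) := lt_of_lt_of_le hδpos ((hball x hx).2 t)
    have h0 : HasDerivAt (fun x : ℝ => 1 + x * Real.cos (2*t)) (Real.cos (2*t)) x :=
      (hasDerivAt_mul_const (Real.cos (2*t))).const_add 1
    exact (h0.rpow_const (p := -(3:ℝ)/2) (Or.inl hppos.ne')).const_mul (g t)

lemma lam_deriv {ε : ℝ} (hε : |ε| < 1) :
    HasDerivAt lam ((-(3:ℝ)/16) * (C1 ε + C2 ε)) ε := by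
  have hgb : ∀ θ : ℝ, |Real.cos θ ^ 2| ≤ 1 := fun θ => by
    rw [abs_of_nonneg (sq_nonneg _)]; exact Real.cos_sq_le_one θ
  have h := (hasDeriv_main (g := fun θ => Real.cos θ ^ 2) (by continuity) hgb hε).const_mul
    (1/4 : ℝ)
  have e : (fun θ : ℝ => Real.cos θ ^ 2 * (Real.cos (2*θ) * (-(3:ℝ)/2)
        * (1 + ε * Real.cos (2*θ)) ^ (-(3:ℝ)/2 - 1)))
      = fun θ : ℝ => ((0:ℝ) + (-(3:ℝ)/4) * Real.cos (2*θ) + (-(3:ℝ)/4) * Real.cos (2*θ)^2)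
          * (1 + ε * Real.cos (2*θ)) ^ (-(5:ℝ)/2) := by
    funext θ
    rw [show (-(3:ℝ)/2 - 1) = (-(5:ℝ)/2) by norm_num, Real.cos_sq θ]
    ring
  rw [e, expand hε] at h
  have e2 : (1/4 : ℝ) * (0 * W ε + (-(3:ℝ)/4) * C1 ε + (-(3:ℝ)/4) * C2 ε)
      = (-(3:ℝ)/16) * (C1 ε + C2 ε) := by ring
  rw [e2] at h
  exact h

lemma nu_deriv {ε : ℝ} (hε : |ε| < 1) :
    HasDerivAt nu ((-(3:ℝ)/8) * C1 ε) ε := by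
  have hgb : ∀ θ : ℝ, |(1:ℝ)| ≤ 1 := fun θ => by norm_num
  have h := hasDeriv_main (g := fun _ => (1:ℝ)) continuous_const hgb hε
  simp only [one_mul] at h
  have h2 := h.const_mul (1/4 : ℝ)
  have e : (fun θ : ℝ => Real.cos (2*θ) * (-(3:ℝ)/2)
        * (1 + ε * Real.cos (2*θ)) ^ (-(3:ℝ)/2 - 1))
      = fun θ : ℝ => ((0:ℝ) + (-(3:ℝ)/2) * Real.cos (2*θ) + 0 * Real.cos (2*θ)^2)
          * (1 + ε * Real.cos (2*θ)) ^ (-(5:ℝ)/2) := by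
    funext θ
    rw [show (-(3:ℝ)/2 - 1) = (-(5:ℝ)/2) by norm_num]
    ring
  rw [e, expand hε] at h2
  have e2 : (1/4 : ℝ) * (0 * W ε + (-(3:ℝ)/2) * C1 ε + 0 * C2 ε)
      = (-(3:ℝ)/8) * C1 ε := by ring
  rw [e2] at h2
  exact h2

end Stmt12Aux

open Stmt12Aux in
theorem stmt_12 : StrictAntiOn (fun ε => lam ε / nu ε) (Set.Ioo (-1:ℝ) 1) := by
  have habs : ∀ ε ∈ Set.Ioo (-1:ℝ) 1, |ε| < 1 := fun ε hε => abs_lt.mpr ⟨hε.1, hε.2⟩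
  have hD : ∀ ε ∈ Set.Ioo (-1:ℝ) 1, HasDerivAt (fun ε => lam ε / nu ε)
      (((-(3:ℝ)/16) * (C1 ε + C2 ε) * nu ε - lam ε * ((-(3:ℝ)/8) * C1 ε)) / nu ε ^ 2) ε :=
    fun ε hε =>
      (lam_deriv (habs ε hε)).div (nu_deriv (habs ε hε)) (nu_pos (habs ε hε)).ne'
  apply strictAntiOn_of_deriv_neg (convex_Ioo _ _)
  · exact fun x hx => (hD x hx).continuousAt.continuousWithinAt
  · intro x hx
    rw [interior_Ioo] at hx
    rw [(hD x hx).deriv]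
    apply div_neg_of_neg_of_pos
    · have hx1 := habs x hx
      have hQ := Q_pos hx1
      rw [lam_eq hx1, nu_eq hx1]
      have e : (-(3:ℝ)/16) * (C1 x + C2 x) * ((1/4) * (W x + x * C1 x + 0 * C2 x))
          - (1/4) * ((1/2) * W x + ((1+x)/2) * C1 x + (x/2) * C2 x) * ((-(3:ℝ)/8) * C1 x)
          = (3/64) * (C1 x ^ 2 - C2 x * W x) := by ring
      rw [e]
      nlinarith [hQ]
    · exact pow_pos (nu_pos (habs x hx)) 2
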